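/- arXiv:1709.04980 — 4 statements merged into one kernel-verified Lean document; each statement's English description precedes it below -/
import Mathlib

section
/- Let 0 < α < 1. Then as n → ∞, the sum ∑_{k=1}^{n} k Δ_k(α) is asymptotic to (α/(1−α)) n^(1−α). -/
/-!
With `g x = (x + c)^(-α)` and `c = 2^(1/α)` we have `Δ_k = g (k-1) - g k`, so summation by parts
gives `∑_{k=1}^n k Δ_k = ∑_{k<n} g k - n g n`. Since `g` is decreasing, `∑_{k<n} g k` lies within
`g 0` of `∫_0^n g = ((n+c)^(1-α) - c^(1-α))/(1-α) ∼ n^(1-α)/(1-α)`, while `n g n ∼ n^(1-α)`;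
hence the sum is `∼ (1/(1-α) - 1) n^(1-α) = α/(1-α) n^(1-α)`.
-/

open Filter Topology

/-- ℓ⁺_m(α) = 1 - (m + 2^(1/α))^(-α) -/
noncomputable def ellp (α : ℝ) (m : ℕ) : ℝ := 1 - ((m : ℝ) + (2 : ℝ) ^ (1/α)) ^ (-α)

/-- Δ_k(α) = ℓ⁺_k(α) - ℓ⁺_{k-1}(α) -/
noncomputable def Dlt (α : ℝ) (k : ℕ) : ℝ := ellp α k - ellp α (k - 1)

open Finset

theorem sum_Icc_natCast_mul_sub_eq {R : Type*} [CommRing R] (f : ℕ → R) (n : ℕ) :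
    ∑ k ∈ Icc 1 n, (k : R) * (f (k - 1) - f k) = ∑ k ∈ range n, f k - n * f n := by
  induction n with
  | zero => simp
  | succ n ih =>
    rw [sum_Icc_succ_top (by omega), ih, sum_range_succ, Nat.add_sub_cancel]
    push_cast
    ring

theorem AntitoneOn.sum_range_le_integral_add {f : ℝ → ℝ} {n : ℕ}
    (hf : AntitoneOn f (Set.Icc 0 n)) :
    ∑ k ∈ range n, f k ≤ (∫ x in (0 : ℝ)..n, f x) + (f 0 - f n) := by
  have h := AntitoneOn.sum_le_integral (x₀ := 0) (a := n) (by simpa only [zero_add] using hf)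
  simp only [zero_add] at h
  have hshift : ∑ k ∈ range (n + 1), f k = f 0 + ∑ i ∈ range n, f ↑(i + 1) := by
    rw [sum_range_succ']; push_cast; ring
  rw [sum_range_succ] at hshift
  linarith

theorem tendsto_add_rpow_div_rpow_atTop (c p : ℝ) :
    Tendsto (fun x : ℝ => (x + c) ^ p / x ^ p) atTop (𝓝 1) := by
  have hbase : Tendsto (fun x : ℝ => 1 + c / x) atTop (𝓝 1) := by
    simpa using tendsto_const_nhds.add ((tendsto_const_nhds (x := c)).div_atTop tendsto_id)
  have h := hbase.rpow_const (p := p) (Or.inl one_ne_zero)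
  rw [Real.one_rpow] at h
  refine h.congr' ?_
  filter_upwards [eventually_gt_atTop 0, eventually_gt_atTop (-c)] with x hx hxc
  rw [← Real.div_rpow (by linarith) hx.le]
  field_simp

section

variable {α c : ℝ}

theorem tendsto_integral_add_rpow_div (hα : α < 1) (hc : 0 < c) :
    Tendsto (fun n : ℕ => (∫ x in (0 : ℝ)..n, (x + c) ^ (-α)) / (n : ℝ) ^ (1 - α))
      atTop (𝓝 (1 / (1 - α))) := by
  have h1α : 0 < 1 - α := by linarith
  have hint : ∀ n : ℕ, (∫ x in (0 : ℝ)..n, (x + c) ^ (-α))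
      = (((n : ℝ) + c) ^ (1 - α) - c ^ (1 - α)) / (1 - α) := by
    intro n
    rw [intervalIntegral.integral_comp_add_right (fun x => x ^ (-α)) c,
      integral_rpow (Or.inr ⟨by linarith, Set.notMem_uIcc_of_lt (by linarith) (by linarith)⟩)]
    ring_nf
  have hpow : Tendsto (fun n : ℕ => (n : ℝ) ^ (1 - α)) atTop atTop :=
    (tendsto_rpow_atTop h1α).comp tendsto_natCast_atTop_atTop
  have := (((tendsto_add_rpow_div_rpow_atTop c (1 - α)).comp tendsto_natCast_atTop_atTop).sub
    (tendsto_const_nhds (x := c ^ (1 - α)) |>.div_atTop hpow)).div_const (1 - α)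
  rw [sub_zero] at this
  refine this.congr fun n => ?_
  simp only [Function.comp, hint]
  ring

theorem tendsto_sum_range_add_rpow_div (hα0 : 0 ≤ α) (hα : α < 1) (hc : 0 < c) :
    Tendsto (fun n : ℕ => (∑ k ∈ range n, ((k : ℝ) + c) ^ (-α)) / (n : ℝ) ^ (1 - α))
      atTop (𝓝 (1 / (1 - α))) := by
  have hpow : Tendsto (fun n : ℕ => (n : ℝ) ^ (1 - α)) atTop atTop :=
    (tendsto_rpow_atTop (by linarith)).comp tendsto_natCast_atTop_atTop
  have hI := tendsto_integral_add_rpow_div hα hc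
  have hupper := hI.add (tendsto_const_nhds (x := c ^ (-α)) |>.div_atTop hpow)
  rw [add_zero] at hupper
  have hanti : ∀ n : ℕ, AntitoneOn (fun x : ℝ => (x + c) ^ (-α)) (Set.Icc 0 n) :=
    fun n x hx y hy hxy => Real.rpow_le_rpow_of_nonpos (by linarith [hx.1]) (by linarith)
      (by linarith)
  refine tendsto_of_tendsto_of_tendsto_of_le_of_le' hI hupper ?_ ?_ <;>
    filter_upwards [eventually_gt_atTop 0] with n hn
  · gcongr
    have h := AntitoneOn.integral_le_sum (x₀ := 0) (a := n)
      (by simpa only [zero_add] using hanti n)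
    simpa only [zero_add] using h
  · rw [← add_div]
    gcongr
    have hsum := (hanti n).sum_range_le_integral_add
    have hlast : 0 ≤ ((n : ℝ) + c) ^ (-α) := by positivity
    simp only [zero_add] at hsum
    linarith

theorem tendsto_sum_range_sub_mul_add_rpow_div (hα0 : 0 ≤ α) (hα : α < 1) (hc : 0 < c) :
    Tendsto (fun n : ℕ => (∑ k ∈ range n, ((k : ℝ) + c) ^ (-α) - n * ((n : ℝ) + c) ^ (-α)) /
      (n : ℝ) ^ (1 - α)) atTop (𝓝 (α / (1 - α))) := by
  have hlast :
      Tendsto (fun n : ℕ => n * ((n : ℝ) + c) ^ (-α) / (n : ℝ) ^ (1 - α)) atTop (𝓝 1) := by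
    refine ((tendsto_add_rpow_div_rpow_atTop c (-α)).comp tendsto_natCast_atTop_atTop).congr' ?_
    filter_upwards [eventually_gt_atTop 0] with n hn
    have hn' : (0 : ℝ) < n := by exact_mod_cast hn
    rw [Function.comp, Real.rpow_sub hn', Real.rpow_one, Real.rpow_neg hn'.le]
    field_simp
  have := (tendsto_sum_range_add_rpow_div hα0 hα hc).sub hlast
  rw [show 1 / (1 - α) - 1 = α / (1 - α) by field_simp [show 1 - α ≠ 0 by linarith]; ring] at this
  exact this.congr fun n => sub_div _ _ _ |>.symm

end

theorem Dlt_eq (α : ℝ) (k : ℕ) :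
    Dlt α k = (((k - 1 : ℕ) : ℝ) + 2 ^ (1 / α)) ^ (-α) - ((k : ℝ) + 2 ^ (1 / α)) ^ (-α) := by
  simp only [Dlt, ellp]
  ring

theorem stmt_10 (α : ℝ) (hα : 0 < α) (hα1 : α < 1) :
    Tendsto
      (fun n : ℕ =>
        (∑ k ∈ Finset.Icc 1 n, (k : ℝ) * Dlt α k) /
          ((α / (1 - α)) * (n : ℝ) ^ ((1 : ℝ) - α)))
      atTop (𝓝 1) := by
  have hlim := (tendsto_sum_range_sub_mul_add_rpow_div hα.le hα1
    (Real.rpow_pos_of_pos two_pos (1 / α))).div_const (α / (1 - α))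
  have h1α : 0 < 1 - α := by linarith
  rw [div_self (by positivity)] at hlim
  refine hlim.congr fun n => ?_
  simp only [Dlt_eq, sum_Icc_natCast_mul_sub_eq fun k : ℕ => ((k : ℝ) + 2 ^ (1 / α)) ^ (-α)]
  ring
end

section
/- The mean maximum square displacement of the Slicer Map with uniform initial conditions on (1/2, 1), given by 2∫_{1/2}^1 m̄_α(x)² dx = 2 ∑_{k=1}^∞ k² Δ_k(α), diverges for 0 < α ≤ 2 and converges for α > 2; equivalently, the series ∑ k² Δ_k(α) diverges for 0 < α ≤ 2 and converges for α > 2. -/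
open Filter Topology

lemma key_mvt (α : ℝ) (hα : 0 < α) (a : ℝ) (ha : 0 < a) :
    α * (a+1) ^ (-α-1) ≤ a ^ (-α) - (a+1) ^ (-α) ∧
    a ^ (-α) - (a+1) ^ (-α) ≤ α * a ^ (-α-1) := by
  have hab : a < a + 1 := by linarith
  obtain ⟨ξ, hξ, hslope⟩ := exists_hasDerivAt_eq_slope (fun x => x ^ (-α))
    (fun x => (-α) * x ^ (-α-1)) hab
    (by
      apply ContinuousOn.rpow_const continuousOn_id
      intro x hx
      exact Or.inl (by simp at hx ⊢; nlinarith [hx.1]))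
    (fun x hx => by
      have hx0 : x ≠ 0 := by have := hx.1; simp at this ⊢; nlinarith
      simpa using Real.hasDerivAt_rpow_const (p := -α) (Or.inl hx0))
  have hξa : a < ξ := hξ.1
  have hξb : ξ < a + 1 := hξ.2
  have hξ0 : 0 < ξ := lt_trans ha hξa
  have hs : a ^ (-α) - (a+1) ^ (-α) = α * ξ ^ (-α-1) := by
    have : (-α) * ξ ^ (-α-1) = ((a+1) ^ (-α) - a ^ (-α)) / (a + 1 - a) := hslope
    rw [show a + 1 - a = 1 by ring, div_one] at this
    linarith
  rw [hs]
  constructor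
  · have := Real.rpow_le_rpow_of_nonpos hξ0 hξb.le (by linarith : -α-1 ≤ 0)
    nlinarith
  · have := Real.rpow_le_rpow_of_nonpos ha hξa.le (by linarith : -α-1 ≤ 0)
    nlinarith

theorem stmt_12 (α : ℝ) (hα : 0 < α) :
    (α ≤ 2 → ¬ Summable (fun k : ℕ => (k : ℝ) ^ 2 * Dlt α k)) ∧
    (2 < α → Summable (fun k : ℕ => (k : ℝ) ^ 2 * Dlt α k)) := by
  set c : ℝ := (2 : ℝ) ^ (1/α) with hc_def
  have hc : 1 < c := by
    rw [hc_def]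
    apply Real.one_lt_rpow_iff_of_pos (by norm_num) |>.2
    exact Or.inl ⟨by norm_num, by positivity⟩
  have hDlt : ∀ k : ℕ, 1 ≤ k →
      Dlt α k = ((k : ℝ) - 1 + c) ^ (-α) - ((k : ℝ) - 1 + c + 1) ^ (-α) := by
    intro k hk
    have h1 : ((k - 1 : ℕ) : ℝ) = (k : ℝ) - 1 := by
      have := Nat.cast_sub (R := ℝ) hk
      simpa using this
    simp only [Dlt, ellp, h1, hc_def, one_div]
    ring_nf
  have ha : ∀ k : ℕ, 1 ≤ k → 0 < (k : ℝ) - 1 + c := by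
    intro k hk
    have : (1 : ℝ) ≤ (k : ℝ) := by exact_mod_cast hk
    linarith
  have hDnn : ∀ k : ℕ, 0 ≤ Dlt α k := by
    intro k
    rcases Nat.eq_zero_or_pos k with rfl | hk
    · simp [Dlt]
    · have key := (key_mvt α hα _ (ha k hk)).1
      have hD := hDlt k hk
      have hpos : 0 < α * ((k : ℝ) - 1 + c + 1) ^ (-α - 1) := by
        have := ha k hk; positivity
      rw [hD]; linarith
  constructor
  · -- divergence for α ≤ 2
    intro hα2 hsum
    set C : ℝ := α * (1 + c) ^ (-α - 1) with hC
    have hCpos : 0 < C := by positivity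
    have hsum1 : Summable (fun n : ℕ => ((n + 1 : ℕ) : ℝ) ^ 2 * Dlt α (n + 1)) :=
      (summable_nat_add_iff 1).2 hsum
    have hcomp : Summable (fun n : ℕ => C * ((n : ℝ) + 1) ^ (1 - α)) := by
      apply Summable.of_nonneg_of_le (fun n => by positivity) _ hsum1
      intro n
      have hk : 1 ≤ n + 1 := Nat.le_add_left 1 n
      have hkc : ((n + 1 : ℕ) : ℝ) = (n : ℝ) + 1 := by push_cast; ring
      have han := ha (n + 1) hk
      have key := (key_mvt α hα _ han).1
      have hD := hDlt (n + 1) hk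
      rw [hkc] at hD han key ⊢
      have h1 : (0 : ℝ) < (n : ℝ) + 1 := by positivity
      have hstep : (1 + c) ^ (-α - 1) * ((n : ℝ) + 1) ^ (-α - 1)
          ≤ ((n : ℝ) + 1 - 1 + c + 1) ^ (-α - 1) := by
        have hle : (n : ℝ) + 1 - 1 + c + 1 ≤ ((n : ℝ) + 1) * (1 + c) := by
          have : (0 : ℝ) ≤ (n : ℝ) * c := by positivity
          nlinarith
        calc (1 + c) ^ (-α - 1) * ((n : ℝ) + 1) ^ (-α - 1)
            = (((n : ℝ) + 1) * (1 + c)) ^ (-α - 1) := by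
              rw [Real.mul_rpow (by positivity) (by positivity)]; ring
          _ ≤ ((n : ℝ) + 1 - 1 + c + 1) ^ (-α - 1) :=
              Real.rpow_le_rpow_of_nonpos (by linarith) hle (by linarith)
      have hpow : ((n : ℝ) + 1) ^ 2 * ((n : ℝ) + 1) ^ (-α - 1) = ((n : ℝ) + 1) ^ (1 - α) := by
        rw [show ((n : ℝ) + 1) ^ 2 = ((n : ℝ) + 1) ^ (2 : ℝ) by
          rw [← Real.rpow_natCast ((n:ℝ)+1) 2]; norm_num,
          ← Real.rpow_add h1]
        ring_nf
      have h2 : (0 : ℝ) ≤ ((n : ℝ) + 1) ^ 2 := sq_nonneg _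
      calc C * ((n : ℝ) + 1) ^ (1 - α)
          = ((n : ℝ) + 1) ^ 2 * (α * ((1 + c) ^ (-α - 1) * ((n : ℝ) + 1) ^ (-α - 1))) := by
            rw [hC, ← hpow]; ring
        _ ≤ ((n : ℝ) + 1) ^ 2 * (α * ((n : ℝ) + 1 - 1 + c + 1) ^ (-α - 1)) := by
            exact mul_le_mul_of_nonneg_left
              (mul_le_mul_of_nonneg_left hstep hα.le) h2
        _ ≤ ((n : ℝ) + 1) ^ 2 * Dlt α (n + 1) := by
            apply mul_le_mul_of_nonneg_left _ h2
            rw [hD]; linarith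
    have hS1 : Summable (fun n : ℕ => ((n : ℝ) + 1) ^ (1 - α)) := by
      have := hcomp.mul_left C⁻¹
      simpa [hCpos.ne', mul_assoc, inv_mul_cancel_left₀] using this
    have hS2 : Summable (fun n : ℕ => (n : ℝ) ^ (1 - α)) := by
      rw [← summable_nat_add_iff 1]
      simpa [Nat.cast_add] using hS1
    have := Real.summable_nat_rpow.1 hS2
    linarith
  · -- convergence for 2 < α
    intro hα2
    refine Summable.of_nonneg_of_le
      (f := fun k : ℕ => α * (k : ℝ) ^ (1 - α))
      (fun k => mul_nonneg (sq_nonneg _) (hDnn k)) ?_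
      ((Real.summable_nat_rpow.2 (by linarith)).mul_left α)
    intro k
    rcases Nat.eq_zero_or_pos k with rfl | hk
    · simp
      positivity
    · have upper := (key_mvt α hα _ (ha k hk)).2
      have hD := hDlt k hk
      have hk0 : (0 : ℝ) < (k : ℝ) := by exact_mod_cast hk
      have hk1 : (1 : ℝ) ≤ (k : ℝ) := by exact_mod_cast hk
      have hbase : ((k : ℝ) - 1 + c) ^ (-α - 1) ≤ (k : ℝ) ^ (-α - 1) :=
        Real.rpow_le_rpow_of_nonpos hk0 (by linarith) (by linarith)
      have hpow : (k : ℝ) ^ 2 * (k : ℝ) ^ (-α - 1) = (k : ℝ) ^ (1 - α) := by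
        rw [show (k : ℝ) ^ 2 = (k : ℝ) ^ (2 : ℝ) by
          rw [← Real.rpow_natCast (k : ℝ) 2]; norm_num,
          ← Real.rpow_add hk0]
        ring_nf
      have h2 : (0 : ℝ) ≤ (k : ℝ) ^ 2 := sq_nonneg _
      calc (k : ℝ) ^ 2 * Dlt α k
          ≤ (k : ℝ) ^ 2 * (α * ((k : ℝ) - 1 + c) ^ (-α - 1)) := by
            apply mul_le_mul_of_nonneg_left _ h2
            rw [hD]; linarith
        _ ≤ (k : ℝ) ^ 2 * (α * (k : ℝ) ^ (-α - 1)) :=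
            mul_le_mul_of_nonneg_left (mul_le_mul_of_nonneg_left hbase hα.le) h2
        _ = α * (k : ℝ) ^ (1 - α) := by rw [← hpow]; ring
end

section
/- Let 0 < α < 2 and fix a real number p > α. Then the truncated p-th moment, 2∫_{1/2}^1 min(m̄_α(x), n)^p dx = 2 ∑_{k=1}^{n-1} k^p Δ_k(α) + 2 n^p ∑_{k=n}^∞ Δ_k(α), is asymptotic to (2p/(p−α)) n^(p−α) as n → ∞. -/
/-!
Summation by parts, with the tail sums `∑_{k>m} Δ_k = (m + 2^(1/α))^(-α)`, turns the truncated
moment into `2 ∑_{k<n} ((k+1)^p - k^p) (k + 2^(1/α))^(-α)`. Its terms are `∼ p k^(p-α-1)`, as are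
the increments of `(p/(p-α)) k^(p-α)`; these are positive with divergent partial sums, so the
partial sums of the two sequences are asymptotically equivalent.
-/

open Filter Topology

open Finset Asymptotics

theorem Asymptotics.IsEquivalent.sum_range {u v : ℕ → ℝ} (h : u ~[atTop] v) (hv : 0 ≤ v)
    (hv_sum : Tendsto (fun n => ∑ i ∈ range n, v i) atTop atTop) :
    (fun n => ∑ i ∈ range n, u i) ~[atTop] fun n => ∑ i ∈ range n, v i := by
  have := h.isLittleO.sum_range hv hv_sum
  simp only [Pi.sub_apply, sum_sub_distrib] at this
  exact this

theorem hasSum_sub_succ_of_antitone {f : ℕ → ℝ} {a : ℝ} (hf : Antitone f)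
    (hlim : Tendsto f atTop (𝓝 a)) : HasSum (fun k => f k - f (k + 1)) (f 0 - a) := by
  refine (hasSum_iff_tendsto_nat_of_nonneg (fun k => sub_nonneg.2 (hf k.le_succ)) _).2 ?_
  simpa only [sum_range_sub'] using tendsto_const_nhds.sub hlim

theorem isEquivalent_natCast_add_rpow (c s : ℝ) :
    (fun k : ℕ => ((k : ℝ) + c) ^ s) ~[atTop] fun k => (k : ℝ) ^ s := by
  have hlin : (fun k : ℕ => (k : ℝ) + c) ~[atTop] fun k => (k : ℝ) :=
    IsEquivalent.refl.add_isLittleO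
      (isLittleO_const_left.2 (Or.inr (tendsto_norm_atTop_atTop.comp tendsto_natCast_atTop_atTop)))
  exact hlin.rpow fun k => Nat.cast_nonneg k

theorem isEquivalent_rpow_add_one_sub_rpow (s : ℝ) :
    (fun k : ℕ => ((k : ℝ) + 1) ^ s - (k : ℝ) ^ s) ~[atTop] fun k => s * (k : ℝ) ^ (s - 1) := by
  rcases eq_or_ne s 0 with rfl | hs
  · simpa using IsEquivalent.refl
  have hderiv : Tendsto (fun t : ℝ => t⁻¹ * ((1 + t) ^ s - 1)) (𝓝[≠] 0) (𝓝 s) := by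
    simpa using hasDerivAt_iff_tendsto_slope_zero.1
      (Real.hasDerivAt_rpow_const (x := 1) (p := s) (Or.inl one_ne_zero))
  have hinv : Tendsto (fun k : ℕ => (k : ℝ)⁻¹) atTop (𝓝[≠] 0) :=
    tendsto_nhdsWithin_mono_right (fun _ hx => ne_of_gt hx)
      (tendsto_inv_atTop_nhdsGT_zero.comp tendsto_natCast_atTop_atTop)
  have hquot : (fun k : ℕ => (k : ℝ) * ((1 + (k : ℝ)⁻¹) ^ s - 1)) ~[atTop] fun _ => s :=
    (isEquivalent_const_iff_tendsto hs).2 (by simpa [Function.comp_def] using hderiv.comp hinv)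
  refine ((IsEquivalent.refl (u := fun k : ℕ => (k : ℝ) ^ (s - 1))).mul hquot).congr_left ?_
    |>.congr_right (Eventually.of_forall fun k => mul_comm _ _)
  filter_upwards [eventually_gt_atTop 0] with k hk
  have hk : (0 : ℝ) < k := Nat.cast_pos.2 hk
  have hsplit : 1 + (k : ℝ)⁻¹ = ((k : ℝ) + 1) / k := by field_simp
  simp only [Pi.mul_apply]
  rw [hsplit, Real.div_rpow (by positivity) hk.le, Real.rpow_sub_one hk.ne']
  field_simp

noncomputable def tailMass (α : ℝ) (m : ℕ) : ℝ := ((m : ℝ) + (2 : ℝ) ^ (1/α)) ^ (-α)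

section tailMass

variable {α : ℝ}

theorem Dlt_succ (α : ℝ) (m : ℕ) : Dlt α (m + 1) = tailMass α m - tailMass α (m + 1) := by
  simp only [Dlt, ellp, tailMass, Nat.add_sub_cancel, Nat.cast_succ]
  ring

theorem tailMass_antitone (hα : 0 < α) : Antitone (tailMass α) := fun m m' h =>
  Real.rpow_le_rpow_of_nonpos (by positivity) (by gcongr) (neg_nonpos.2 hα.le)

theorem tendsto_tailMass_atTop (hα : 0 < α) : Tendsto (tailMass α) atTop (𝓝 0) :=
  (tendsto_rpow_neg_atTop hα).comp (tendsto_natCast_atTop_atTop.atTop_add tendsto_const_nhds)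

theorem tsum_Dlt_add (hα : 0 < α) (m : ℕ) : ∑' k, Dlt α (m + 1 + k) = tailMass α m := by
  have hlim : Tendsto (fun k => tailMass α (m + k)) atTop (𝓝 0) :=
    (tendsto_tailMass_atTop hα).comp (tendsto_add_atTop_nat m |>.congr fun k => add_comm k m)
  have := hasSum_sub_succ_of_antitone (fun _ _ h => tailMass_antitone hα (Nat.add_le_add_left h m)) hlim
  simp only [add_zero, sub_zero] at this
  refine (this.congr_fun fun k => ?_).tsum_eq
  rw [add_right_comm, Dlt_succ, add_assoc]

theorem isEquivalent_tailMass (α : ℝ) : tailMass α ~[atTop] fun k => (k : ℝ) ^ (-α) :=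
  isEquivalent_natCast_add_rpow _ _

theorem sum_Icc_mul_Dlt_add_mul_tailMass {f : ℕ → ℝ} (hf : f 0 = 0) (m : ℕ) :
    ∑ k ∈ Icc 1 m, f k * Dlt α k + f (m + 1) * tailMass α m
      = ∑ k ∈ range (m + 1), (f (k + 1) - f k) * tailMass α k := by
  induction m with
  | zero => simp [hf]
  | succ m ih =>
    rw [sum_Icc_succ_top (by omega), sum_range_succ, ← ih, Dlt_succ]
    ring

end tailMass

section moments

variable {α p : ℝ}

theorem isEquivalent_rpow_increment_mul_tailMass (hpα : p ≠ α) :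
    (fun k : ℕ => (((k : ℝ) + 1) ^ p - (k : ℝ) ^ p) * tailMass α k) ~[atTop]
      fun k => p / (p - α) * (((k : ℝ) + 1) ^ (p - α) - (k : ℝ) ^ (p - α)) := by
  have hsub : p - α ≠ 0 := sub_ne_zero.2 hpα
  have hprod := (isEquivalent_rpow_add_one_sub_rpow p).mul (isEquivalent_tailMass α)
  have hscaled := (IsEquivalent.refl (u := fun _ : ℕ => p / (p - α))).mul
    (isEquivalent_rpow_add_one_sub_rpow (p - α))
  refine hprod.trans (hscaled.symm.congr_left ?_)
  filter_upwards [eventually_gt_atTop 0] with k hk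
  have hk : (0 : ℝ) < k := Nat.cast_pos.2 hk
  simp only [Pi.mul_apply]
  rw [mul_assoc, ← Real.rpow_add hk]
  field_simp
  ring_nf

theorem isEquivalent_sum_range_rpow_increment_mul_tailMass (hα : 0 < α) (hp : α < p) :
    (fun n : ℕ => ∑ k ∈ range n, (((k : ℝ) + 1) ^ p - (k : ℝ) ^ p) * tailMass α k) ~[atTop]
      fun n => p / (p - α) * (n : ℝ) ^ (p - α) := by
  have hpα : 0 < p - α := sub_pos.2 hp
  have htelescope : ∀ n : ℕ, ∑ k ∈ range n, p / (p - α) * (((k : ℝ) + 1) ^ (p - α) - (k : ℝ) ^ (p - α))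
      = p / (p - α) * (n : ℝ) ^ (p - α) := fun n => by
    have := sum_range_sub (fun k : ℕ => (k : ℝ) ^ (p - α)) n
    push_cast at this
    rw [← mul_sum, this, Real.zero_rpow hpα.ne', sub_zero]
  simp only [← htelescope]
  refine (isEquivalent_rpow_increment_mul_tailMass hp.ne').sum_range (fun k => ?_) ?_
  · exact mul_nonneg (div_pos (hα.trans hp) hpα).le
      (sub_nonneg.2 (Real.rpow_le_rpow (Nat.cast_nonneg k) (by simp) hpα.le))
  · simp only [htelescope]
    exact ((tendsto_rpow_atTop hpα).comp tendsto_natCast_atTop_atTop).const_mul_atTop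
      (div_pos (hα.trans hp) hpα)

end moments

theorem stmt_13_general (α p : ℝ) (hα : 0 < α) (hp : α < p) :
    Tendsto
      (fun n : ℕ =>
        (2 * ∑ k ∈ Finset.Icc 1 (n - 1), (k : ℝ) ^ p * Dlt α k
          + 2 * (n : ℝ) ^ p * ∑' k : ℕ, Dlt α (n + k)) /
          ((2 * p / (p - α)) * (n : ℝ) ^ (p - α)))
      atTop (𝓝 1) := by
  have hp0 : 0 < p := hα.trans hp
  have hmoment : ∀ᶠ n : ℕ in atTop,
      2 * ∑ k ∈ Icc 1 (n - 1), (k : ℝ) ^ p * Dlt α k + 2 * (n : ℝ) ^ p * ∑' k, Dlt α (n + k)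
        = 2 * ∑ k ∈ range n, (((k : ℝ) + 1) ^ p - (k : ℝ) ^ p) * tailMass α k := by
    filter_upwards [eventually_gt_atTop 0] with n hn
    obtain ⟨m, rfl⟩ : ∃ m, n = m + 1 := ⟨n - 1, by omega⟩
    have habel := sum_Icc_mul_Dlt_add_mul_tailMass (α := α) (f := fun k : ℕ => (k : ℝ) ^ p)
      (by simp [Real.zero_rpow hp0.ne']) m
    rw [Nat.add_sub_cancel, tsum_Dlt_add hα]
    push_cast at habel ⊢
    rw [← habel]
    ring
  have hequiv := ((IsEquivalent.refl (u := fun _ : ℕ => (2 : ℝ))).mul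
    (isEquivalent_sum_range_rpow_increment_mul_tailMass hα hp)).congr_left
      (hmoment.mono fun n hn => hn.symm)
  refine (isEquivalent_iff_tendsto_one ?_).1 (hequiv.congr_right (Eventually.of_forall fun n => ?_))
  · filter_upwards [eventually_gt_atTop 0] with n hn
    have : (0 : ℝ) < n := Nat.cast_pos.2 hn
    have : 0 < p - α := sub_pos.2 hp
    positivity
  · simp only [Pi.mul_apply]
    ring

theorem stmt_13 (α p : ℝ) (hα : 0 < α) (hα2 : α < 2) (hp : α < p) :
    Tendsto
      (fun n : ℕ =>
        (2 * ∑ k ∈ Finset.Icc 1 (n - 1), (k : ℝ) ^ p * Dlt α k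
          + 2 * (n : ℝ) ^ p * ∑' k : ℕ, Dlt α (n + k)) /
          ((2 * p / (p - α)) * (n : ℝ) ^ (p - α)))
      atTop (𝓝 1) :=
  stmt_13_general α p hα hp
end

section
/- Fix ℓ > 0 and α with 0 < α < 2, α ≠ 1, and write n = ⌊(1+ℓ) m⌋. Then the Slicer Map auto-correlation φ(n, m) is asymptotic to (2/(1−α)) ((1+ℓ)^(1−α) − α/(2−α)) m^(2−α) as m → ∞. -/
/-!
Summation by parts turns `φ(n, m)` into `2 ∑_{j<m} (2j+1) (j+c)^(-α) + 2m ∑_{m≤j<n} (j+c)^(-α)`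
with `c = 2^(1/α)`: the boundary terms cancel against the telescoping tail
`∑_{k>n} Δ_k = (n+c)^(-α)`. Every sum of `(j+c)^(p-1)` differs from the integral
`((b+c)^p - (a+c)^p)/p` by at most its two endpoint values, because the summand is monotone.
Writing `2j+1 = 2(j+c) + (1-2c)`, the first sum is `4 m^(2-α)/(2-α) + o(m^(2-α))` and the second,
for `n ∼ (1+ℓ)m`, is `2 ((1+ℓ)^(1-α) - 1)/(1-α) · m^(2-α) + o(m^(2-α))`; these add up to the
stated constant.
-/

open Filter Topology

/-- Position-position auto-correlation of the Slicer Map, for times m ≤ n. -/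
noncomputable def phi (α : ℝ) (n m : ℕ) : ℝ :=
  2 * ∑ k ∈ Finset.Icc 1 m, (k : ℝ) ^ 2 * Dlt α k
    + 2 * m * ∑ k ∈ Finset.Icc (m + 1) n, (k : ℝ) * Dlt α k
    + 2 * m * n * ∑' k : ℕ, Dlt α (n + 1 + k)

open Finset

section SummationByParts

variable (u : ℕ → ℝ)

theorem sum_Icc_sq_mul_sub (m : ℕ) :
    ∑ k ∈ Icc 1 m, (k : ℝ) ^ 2 * (u (k - 1) - u k)
      = ∑ j ∈ range m, (2 * j + 1 : ℝ) * u j - m ^ 2 * u m := by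
  induction m with
  | zero => simp
  | succ m ih =>
    rw [sum_Icc_succ_top (by omega), ih, sum_range_succ, Nat.add_sub_cancel]
    push_cast
    ring

theorem sum_Icc_mul_sub {m n : ℕ} (hmn : m ≤ n) :
    ∑ k ∈ Icc (m + 1) n, (k : ℝ) * (u (k - 1) - u k)
      = m * u m - n * u n + ∑ j ∈ Ico m n, u j := by
  induction n, hmn using Nat.le_induction with
  | base => simp
  | succ n hmn ih =>
    rw [sum_Icc_succ_top (by omega), sum_Ico_succ_top hmn, ih, Nat.add_sub_cancel]
    push_cast
    ring

variable {u}

theorem hasSum_sub_succ (hu : Antitone u) (h0 : Tendsto u atTop (𝓝 0)) :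
    HasSum (fun k => u k - u (k + 1)) (u 0) := by
  rw [hasSum_iff_tendsto_nat_of_nonneg fun k => sub_nonneg.2 (hu k.le_succ)]
  simp_rw [sum_range_sub']
  simpa using tendsto_const_nhds.sub h0

end SummationByParts

theorem phi_eq_sum_rpow {α : ℝ} (hα : 0 < α) {m n : ℕ} (hmn : m ≤ n) :
    phi α n m = 2 * ∑ j ∈ range m, (2 * j + 1 : ℝ) * ((j : ℝ) + 2 ^ (1 / α)) ^ (-α)
      + 2 * m * ∑ j ∈ Ico m n, ((j : ℝ) + 2 ^ (1 / α)) ^ (-α) := by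
  set u : ℕ → ℝ := fun j => ((j : ℝ) + 2 ^ (1 / α)) ^ (-α)
  have hDlt : ∀ k, Dlt α k = u (k - 1) - u k := fun k => by
    simp only [Dlt, ellp, u]
    ring
  have hu : Antitone u := fun i j hij =>
    Real.rpow_le_rpow_of_nonpos (by positivity) (by gcongr) (by linarith)
  have h0 : Tendsto u atTop (𝓝 0) :=
    (tendsto_rpow_neg_atTop hα).comp
      (tendsto_atTop_add_const_right _ _ tendsto_natCast_atTop_atTop)
  have htail : ∑' k, Dlt α (n + 1 + k) = u n := by
    have hsum := hasSum_sub_succ (hu.comp_monotone fun _ _ h => Nat.add_le_add_left h n)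
      ((h0.comp (tendsto_add_atTop_nat n)).congr fun k => by simp [add_comm])
    refine Eq.trans (tsum_congr fun k => ?_) hsum.tsum_eq
    rw [hDlt, show n + 1 + k - 1 = n + k by omega, show n + 1 + k = n + (k + 1) by omega]
    rfl
  rw [phi, htail]
  simp only [hDlt]
  rw [sum_Icc_sq_mul_sub, sum_Icc_mul_sub u hmn]
  ring

theorem MonotoneOn.abs_sum_Ico_sub_integral_le {f : ℝ → ℝ} {a b : ℕ} (hab : a ≤ b)
    (hf : MonotoneOn f (Set.Icc a b)) :
    |∑ i ∈ Ico a b, f i - ∫ x in (a : ℝ)..b, f x| ≤ |f b - f a| := by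
  have hshift : ∑ i ∈ Ico a b, f ↑(i + 1) = ∑ i ∈ Ico a b, f i + (f b - f a) := by
    rw [← sum_Ico_sub (fun i : ℕ => f i) hab, ← sum_add_distrib]
    exact sum_congr rfl fun i _ => by ring
  have h₁ := hf.sum_le_integral_Ico hab
  have h₂ := hf.integral_le_sum_Ico hab
  rw [abs_le]
  constructor <;> linarith [le_abs_self (f b - f a)]

theorem AntitoneOn.abs_sum_Ico_sub_integral_le {f : ℝ → ℝ} {a b : ℕ} (hab : a ≤ b)
    (hf : AntitoneOn f (Set.Icc a b)) :
    |∑ i ∈ Ico a b, f i - ∫ x in (a : ℝ)..b, f x| ≤ |f b - f a| := by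
  have := hf.neg.abs_sum_Ico_sub_integral_le hab
  simp only [sum_neg_distrib, intervalIntegral.integral_neg] at this
  rwa [neg_sub_neg, neg_sub_neg, abs_sub_comm, abs_sub_comm (f a)] at this

theorem integral_add_const_rpow_sub_one {c p : ℝ} (hc : 0 < c) (hp : p ≠ 0) {a b : ℝ}
    (ha : 0 ≤ a) (hb : 0 ≤ b) :
    ∫ x in a..b, (x + c) ^ (p - 1) = ((b + c) ^ p - (a + c) ^ p) / p := by
  rw [intervalIntegral.integral_comp_add_right (fun x => x ^ (p - 1)), integral_rpow,
    sub_add_cancel]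
  refine Or.inr ⟨fun h => hp (by linarith), fun h => ?_⟩
  rcases Set.mem_uIcc.1 h with ⟨h, _⟩ | ⟨h, _⟩ <;> linarith

theorem abs_sum_Ico_rpow_sub_le {c p : ℝ} (hc : 0 < c) (hp : p ≠ 0) {a b : ℕ} (hab : a ≤ b) :
    |∑ j ∈ Ico a b, ((j : ℝ) + c) ^ (p - 1) - (((b : ℝ) + c) ^ p - ((a : ℝ) + c) ^ p) / p|
      ≤ ((a : ℝ) + c) ^ (p - 1) + ((b : ℝ) + c) ^ (p - 1) := by
  set f : ℝ → ℝ := fun x => (x + c) ^ (p - 1)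
  have hpos : ∀ x ∈ Set.Icc (a : ℝ) b, 0 < x + c := fun x hx => by
    linarith [hx.1, (Nat.cast_nonneg a : (0 : ℝ) ≤ a)]
  have hbound : |∑ i ∈ Ico a b, f i - ∫ x in (a : ℝ)..b, f x| ≤ |f b - f a| := by
    rcases le_total 0 (p - 1) with hp1 | hp1
    · refine MonotoneOn.abs_sum_Ico_sub_integral_le hab fun x hx y hy hxy => ?_
      exact Real.rpow_le_rpow (hpos x hx).le (by linarith) hp1
    · refine AntitoneOn.abs_sum_Ico_sub_integral_le hab fun x hx y hy hxy => ?_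
      exact Real.rpow_le_rpow_of_nonpos (hpos x hx) (by linarith) hp1
  have hfa : 0 ≤ f a := by positivity
  have hfb : 0 ≤ f b := by positivity
  rw [integral_add_const_rpow_sub_one hc hp a.cast_nonneg b.cast_nonneg] at hbound
  exact hbound.trans ((abs_sub _ _).trans (by rw [abs_of_nonneg hfa, abs_of_nonneg hfb, add_comm]))

section Asymptotics

theorem tendsto_div_of_abs_sub_le {S X E d : ℕ → ℝ} {L : ℝ} (hd : ∀ m, 0 ≤ d m)
    (h : ∀ m, |S m - X m| ≤ E m) (hX : Tendsto (fun m => X m / d m) atTop (𝓝 L))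
    (hE : Tendsto (fun m => E m / d m) atTop (𝓝 0)) :
    Tendsto (fun m => S m / d m) atTop (𝓝 L) := by
  refine hX.congr_dist (squeeze_zero (fun _ => dist_nonneg) (fun m => ?_) hE)
  rw [Real.dist_eq, ← sub_div, abs_div, abs_of_nonneg (hd m), abs_sub_comm]
  exact div_le_div_of_nonneg_right (h m) (hd m)

theorem tendsto_const_div_natCast_rpow (K : ℝ) {p : ℝ} (hp : 0 < p) :
    Tendsto (fun m : ℕ => K / (m : ℝ) ^ p) atTop (𝓝 0) :=
  tendsto_const_nhds.div_atTop ((tendsto_rpow_atTop hp).comp tendsto_natCast_atTop_atTop)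

variable {x : ℕ → ℝ} {u : ℝ}

theorem tendsto_add_const_div_natCast (c : ℝ) (h : Tendsto (fun m => x m / m) atTop (𝓝 u)) :
    Tendsto (fun m : ℕ => (x m + c) / m) atTop (𝓝 u) := by
  simpa [add_div] using h.add (tendsto_const_div_atTop_nhds_zero_nat c)

theorem tendsto_natCast_add_const_div_natCast (c : ℝ) :
    Tendsto (fun m : ℕ => ((m : ℝ) + c) / m) atTop (𝓝 1) :=
  tendsto_add_const_div_natCast c ((tendsto_natCast_div_add_atTop (0 : ℝ)).congr fun m => by simp)

theorem tendsto_rpow_div_natCast_rpow (q : ℝ) (hx : ∀ m, 0 ≤ x m) (hu : u ≠ 0 ∨ 0 ≤ q)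
    (h : Tendsto (fun m => x m / m) atTop (𝓝 u)) :
    Tendsto (fun m : ℕ => x m ^ q / (m : ℝ) ^ q) atTop (𝓝 (u ^ q)) :=
  (h.rpow_const hu).congr fun m => Real.div_rpow (hx m) m.cast_nonneg q

theorem tendsto_rpow_sub_one_div_natCast_rpow (p : ℝ) (hx : ∀ m, 0 ≤ x m) (hu : u ≠ 0)
    (h : Tendsto (fun m => x m / m) atTop (𝓝 u)) :
    Tendsto (fun m : ℕ => x m ^ (p - 1) / (m : ℝ) ^ p) atTop (𝓝 0) := by
  refine ((tendsto_rpow_div_natCast_rpow (p - 1) hx (Or.inl hu) h).div_atTop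
    tendsto_natCast_atTop_atTop).congr' ?_
  filter_upwards [eventually_ne_atTop 0] with m hm
  rw [Real.rpow_sub_one (Nat.cast_ne_zero.2 hm), div_div, div_mul_cancel₀ _ (Nat.cast_ne_zero.2 hm)]

end Asymptotics

section SumAsymptotics

variable {c p : ℝ}

theorem tendsto_sum_Ico_rpow_div {A B : ℝ} (hc : 0 < c) (hp : p ≠ 0) {a b : ℕ → ℕ}
    (hab : ∀ m, a m ≤ b m)
    (hA : Tendsto (fun m => ((a m : ℝ) + c) ^ p / (m : ℝ) ^ p) atTop (𝓝 A))
    (hB : Tendsto (fun m => ((b m : ℝ) + c) ^ p / (m : ℝ) ^ p) atTop (𝓝 B))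
    (hA' : Tendsto (fun m => ((a m : ℝ) + c) ^ (p - 1) / (m : ℝ) ^ p) atTop (𝓝 0))
    (hB' : Tendsto (fun m => ((b m : ℝ) + c) ^ (p - 1) / (m : ℝ) ^ p) atTop (𝓝 0)) :
    Tendsto (fun m => (∑ j ∈ Ico (a m) (b m), ((j : ℝ) + c) ^ (p - 1)) / (m : ℝ) ^ p) atTop
      (𝓝 ((B - A) / p)) := by
  refine tendsto_div_of_abs_sub_le (fun m => by positivity)
    (fun m => abs_sum_Ico_rpow_sub_le hc hp (hab m))
    (((hB.sub hA).div_const p).congr fun m => ?_)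
    (by simpa [add_div] using hA'.add hB')
  ring

theorem tendsto_sum_range_rpow_div (hc : 0 < c) (hp : 0 < p) :
    Tendsto (fun m : ℕ => (∑ j ∈ range m, ((j : ℝ) + c) ^ (p - 1)) / (m : ℝ) ^ p) atTop
      (𝓝 (1 / p)) := by
  have hm := tendsto_natCast_add_const_div_natCast c
  have := tendsto_sum_Ico_rpow_div (a := fun _ => 0) (b := id) hc hp.ne' (fun m => Nat.zero_le m)
    (by simpa using tendsto_const_div_natCast_rpow (c ^ p) hp)
    (by simpa using tendsto_rpow_div_natCast_rpow p (fun m => by positivity) (Or.inl one_ne_zero) hm)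
    (by simpa using tendsto_const_div_natCast_rpow (c ^ (p - 1)) hp)
    (tendsto_rpow_sub_one_div_natCast_rpow p (fun m => by positivity) one_ne_zero hm)
  simpa [Nat.Ico_zero_eq_range] using this

theorem tendsto_sum_Ico_self_rpow_div {t : ℝ} (hc : 0 < c) (hp : p ≠ 0) (ht : 0 < t) {n : ℕ → ℕ}
    (hmn : ∀ m, m ≤ n m) (hn : Tendsto (fun m => (n m : ℝ) / m) atTop (𝓝 t)) :
    Tendsto (fun m : ℕ => (∑ j ∈ Ico m (n m), ((j : ℝ) + c) ^ (p - 1)) / (m : ℝ) ^ p) atTop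
      (𝓝 ((t ^ p - 1) / p)) := by
  have hm := tendsto_natCast_add_const_div_natCast c
  have hn' := tendsto_add_const_div_natCast c hn
  have hx : ∀ m : ℕ, 0 ≤ (m : ℝ) + c := fun m => by positivity
  have hy : ∀ m : ℕ, 0 ≤ (n m : ℝ) + c := fun m => by positivity
  have := tendsto_sum_Ico_rpow_div (a := id) hc hp hmn
    (tendsto_rpow_div_natCast_rpow p hx (Or.inl one_ne_zero) hm)
    (tendsto_rpow_div_natCast_rpow p hy (Or.inl ht.ne') hn')
    (tendsto_rpow_sub_one_div_natCast_rpow p hx one_ne_zero hm)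
    (tendsto_rpow_sub_one_div_natCast_rpow p hy ht.ne' hn')
  rwa [Real.one_rpow] at this

end SumAsymptotics

theorem tendsto_sum_range_rpow_neg_div {c α : ℝ} (hc : 1 ≤ c) (hα : 0 ≤ α) (hα2 : α < 2) :
    Tendsto (fun m : ℕ => (∑ j ∈ range m, ((j : ℝ) + c) ^ (-α)) / (m : ℝ) ^ (2 - α)) atTop
      (𝓝 0) := by
  have hq : 0 < 1 - α / 2 := by linarith
  have hup := (tendsto_sum_range_rpow_div (by linarith : (0 : ℝ) < c) hq).div_atTop
    ((tendsto_rpow_atTop hq).comp tendsto_natCast_atTop_atTop)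
  refine squeeze_zero (fun m => by positivity) (fun m => ?_) hup
  -- compare with `(j + c)^(-α/2)`, whose sum is `O(m^(1 - α/2))` and `2 (1 - α/2) = 2 - α`
  rw [Function.comp_apply, div_div, ← Real.rpow_add' m.cast_nonneg (by linarith),
    show 1 - α / 2 + (1 - α / 2) = 2 - α by ring]
  gcongr with j <;> linarith [j.cast_nonneg (α := ℝ)]

theorem tendsto_phi_div_rpow {α t : ℝ} (hα : 0 < α) (hα2 : α < 2) (hα1 : α ≠ 1) (ht : 0 < t)
    {n : ℕ → ℕ} (hmn : ∀ m, m ≤ n m) (hn : Tendsto (fun m => (n m : ℝ) / m) atTop (𝓝 t)) :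
    Tendsto (fun m => phi α (n m) m / (m : ℝ) ^ (2 - α)) atTop
      (𝓝 (4 / (2 - α) + 2 * ((t ^ (1 - α) - 1) / (1 - α)))) := by
  set c : ℝ := 2 ^ (1 / α) with hc_def
  have hc : 1 ≤ c := Real.one_le_rpow one_le_two (by positivity)
  have hB := tendsto_sum_range_rpow_div (p := 2 - α) (by linarith : (0 : ℝ) < c) (by linarith)
  have hA := tendsto_sum_range_rpow_neg_div hc hα.le hα2
  have hQ := tendsto_sum_Ico_self_rpow_div (p := 1 - α) (by linarith : (0 : ℝ) < c)
    (sub_ne_zero.2 (Ne.symm hα1)) ht hmn hn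
  rw [show (2 : ℝ) - α - 1 = 1 - α by ring] at hB
  rw [show (1 : ℝ) - α - 1 = -α by ring] at hQ
  have hlim := ((hB.const_mul 4).add (hA.const_mul (2 * (1 - 2 * c)))).add (hQ.const_mul 2)
  rw [mul_zero, add_zero, mul_one_div] at hlim
  refine hlim.congr' ?_
  filter_upwards [eventually_ne_atTop 0] with m hm
  have hsplit : ∑ j ∈ range m, (2 * j + 1 : ℝ) * ((j : ℝ) + c) ^ (-α)
      = 2 * ∑ j ∈ range m, ((j : ℝ) + c) ^ (1 - α)
        + (1 - 2 * c) * ∑ j ∈ range m, ((j : ℝ) + c) ^ (-α) := by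
    rw [mul_sum, mul_sum, ← sum_add_distrib]
    refine sum_congr rfl fun j _ => ?_
    rw [show 1 - α = -α + 1 by ring, Real.rpow_add_one (by positivity)]
    ring
  have hm' : (m : ℝ) ≠ 0 := Nat.cast_ne_zero.2 hm
  have hpow : (m : ℝ) ^ (2 - α) = (m : ℝ) ^ (1 - α) * m := by
    rw [← Real.rpow_add_one hm']
    ring_nf
  rw [phi_eq_sum_rpow hα (hmn m), ← hc_def, hsplit, hpow]
  field_simp
  ring

theorem rpow_sub_one_div_pos {t q : ℝ} (ht : 1 < t) (hq : q ≠ 0) : 0 < (t ^ q - 1) / q := by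
  rcases hq.lt_or_gt with hq | hq
  · exact div_pos_of_neg_of_neg (by linarith [Real.rpow_lt_one_of_one_lt_of_neg ht hq]) hq
  · exact div_pos (by linarith [Real.one_lt_rpow ht hq]) hq

theorem stmt_17 (α ℓ : ℝ) (hℓ : 0 < ℓ) (hα : 0 < α) (hα2 : α < 2) (hα1 : α ≠ 1) :
    Tendsto
      (fun m : ℕ => phi α ⌊(1 + ℓ) * (m : ℝ)⌋₊ m /
        ((2 / (1 - α)) * ((1 + ℓ) ^ ((1 : ℝ) - α) - α / (2 - α)) * (m : ℝ) ^ ((2 : ℝ) - α)))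
      atTop (𝓝 1) := by
  have hmn : ∀ m : ℕ, m ≤ ⌊(1 + ℓ) * (m : ℝ)⌋₊ := fun m =>
    Nat.le_floor (by nlinarith [m.cast_nonneg (α := ℝ)])
  have hn := (tendsto_nat_floor_mul_div_atTop (by linarith : (0 : ℝ) ≤ 1 + ℓ)).comp
    tendsto_natCast_atTop_atTop
  have hphi := tendsto_phi_div_rpow hα hα2 hα1 (by linarith) hmn hn
  have hpos : 0 < 4 / (2 - α) + 2 * (((1 + ℓ) ^ (1 - α) - 1) / (1 - α)) := by
    have := rpow_sub_one_div_pos (by linarith : 1 < 1 + ℓ) (sub_ne_zero.2 (Ne.symm hα1))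
    have : 0 < 4 / (2 - α) := div_pos four_pos (by linarith)
    positivity
  have hC : 4 / (2 - α) + 2 * (((1 + ℓ) ^ (1 - α) - 1) / (1 - α))
      = (2 / (1 - α)) * ((1 + ℓ) ^ ((1 : ℝ) - α) - α / (2 - α)) := by
    field_simp [sub_ne_zero.2 (Ne.symm hα1), sub_ne_zero.2 hα2.ne']
    ring
  rw [hC] at hphi hpos
  have hlim := hphi.div_const ((2 / (1 - α)) * ((1 + ℓ) ^ ((1 : ℝ) - α) - α / (2 - α)))
  rw [div_self hpos.ne'] at hlim
  exact hlim.congr fun m => by rw [div_div, mul_comm ((m : ℝ) ^ _)]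
end
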